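/- arXiv:math/9205202 — 2 statements merged into one kernel-verified Lean document; each statement's English description precedes it below -/
import Mathlib

section
/- For every natural number m, C₉(m + 2) ≥ ack 8 m + 4 (the growth estimate F₈(m−2) for column 9 in Table 1, with the trivial improvement +4). -/
def C0 (m : ℕ) : ℕ := 2 ^ m
def C1 (m : ℕ) : ℕ := 2 ^ m

def C2 : ℕ → ℕ
  | 0 => 0
  | m + 1 => C2 m + 2 ^ (C2 m)

def C3 (m : ℕ) : ℕ := 2 ^ m

def C4 : ℕ → ℕ
  | 0 => 0
  | 1 => 8
  | m + 2 => C4 (m + 1) + C1 (C2 (C3 (C4 (m + 1)))) - 1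

def C5 : ℕ → ℕ
  | 0 => 0
  | 1 => 2
  | m + 2 => C5 (m + 1) + C3 (C4 (C5 (m + 1)))

def C6 (m : ℕ) : ℕ := 2 ^ m

def C7 : ℕ → ℕ
  | 0 => 0
  | m + 1 => C7 m + C1 (C2 (C3 (C4 (C5 (C6 (C7 m)))))) - 8

def C8 (m : ℕ) : ℕ := 2 ^ m

def H (n : ℕ) : ℕ := C1 (C2 (C3 (C4 (C5 n))))
def G (n : ℕ) : ℕ := C1 (C2 (C3 (C4 (C5 (C6 (C7 (C8 n)))))))

def C9 : ℕ → ℕ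
  | 0 => 0
  | 1 => G (H 1 - 8) - 8
  | m + 2 => C9 (m + 1) + G (C9 (m + 1)) - H 1

def C10 : ℕ → ℕ
  | 0 => 0
  | m + 1 => C10 m + C3 (C4 (C5 (C6 (C7 (C8 (C9 (C10 m)))))))

/-!
Each column dominates one level of the Ackermann hierarchy: `ack 4 m + 3 ≤ C2 (m + 4)`,
`ack 5 m + 3 ≤ C4 (m + 2)`, `ack 6 m + 3 ≤ C5 (m + 3)`, `ack 7 m + 3 ≤ C7 (m + 2)` and finally
`ack 8 m + 4 ≤ C9 (m + 1)`. All five come from one induction: since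
`ack (k + 1) (m + 1) = ack k (ack (k + 1) m)`, a sequence with `g (f m) ≤ f (m + 1)` dominates
`ack (k + 1)` as soon as the monotone step function `g` dominates `ack k`, and the additive slack
absorbs the constants subtracted in the recursions of `C4`, `C7` and `C9`.
-/

theorem ack_succ_add_le_of_step {k c : ℕ} {f g : ℕ → ℕ} (hg_mono : Monotone g)
    (hg : ∀ n, ack k n + c ≤ g (n + c)) (hf : ∀ m, g (f m) ≤ f (m + 1))
    (h0 : ack (k + 1) 0 + c ≤ f 0) (m : ℕ) : ack (k + 1) m + c ≤ f m := by
  induction m with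
  | zero => exact h0
  | succ m ih =>
    calc ack (k + 1) (m + 1) + c = ack k (ack (k + 1) m) + c := by rw [ack_succ_succ]
      _ ≤ g (ack (k + 1) m + c) := hg _
      _ ≤ g (f m) := hg_mono ih
      _ ≤ f (m + 1) := hf m

theorem two_pow_strictMono : StrictMono (2 ^ · : ℕ → ℕ) :=
  pow_right_strictMono₀ one_lt_two

theorem add_eight_le_two_pow {x : ℕ} (hx : 4 ≤ x) : x + 8 ≤ 2 ^ x := by
  obtain ⟨k, rfl⟩ := Nat.exists_eq_add_of_le hx
  have hk : k < 2 ^ k := Nat.lt_two_pow_self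
  rw [pow_add]
  omega

theorem C2_succ (n : ℕ) : C2 (n + 1) = C2 n + 2 ^ C2 n := rfl

theorem C2_strictMono : StrictMono C2 :=
  strictMono_nat_of_lt_succ fun n => by
    rw [C2_succ]
    exact Nat.lt_add_of_pos_right (Nat.two_pow_pos _)

theorem two_pow_C2_le_C2_succ (n : ℕ) : 2 ^ C2 n ≤ C2 (n + 1) := by
  rw [C2_succ]
  exact Nat.le_add_left _ _

theorem ack_four_add_three_le_C2 (m : ℕ) : ack 4 m + 3 ≤ C2 (m + 4) := by
  refine ack_succ_add_le_of_step (k := 3) (f := fun m => C2 (m + 4)) (g := (2 ^ ·))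
    two_pow_strictMono.monotone (fun n => ?_) (fun m => ?_) ?_ m
  · have : n + 3 < 2 ^ (n + 3) := Nat.lt_two_pow_self
    rw [ack_three]
    omega
  · exact two_pow_C2_le_C2_succ (m + 4)
  · rw [ack_succ_zero, ack_three]
    decide

theorem C4_add_two (n : ℕ) : C4 (n + 2) = C4 (n + 1) + 2 ^ C2 (2 ^ C4 (n + 1)) - 1 := rfl

theorem C2_two_pow_C4_le (n : ℕ) : C2 (2 ^ C4 (n + 1)) ≤ C4 (n + 2) := by
  have : C2 (2 ^ C4 (n + 1)) < 2 ^ C2 (2 ^ C4 (n + 1)) := Nat.lt_two_pow_self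
  rw [C4_add_two]
  omega

theorem C4_strictMono : StrictMono C4 := by
  refine strictMono_nat_of_lt_succ fun n => ?_
  cases n with
  | zero => decide
  | succ n =>
    have h1 : 1 ≤ 2 ^ C4 (n + 1) := Nat.one_le_two_pow
    have h2 : 2 ^ C4 (n + 1) ≤ C2 (2 ^ C4 (n + 1)) := C2_strictMono.le_apply
    have h3 : 1 < 2 ^ C2 (2 ^ C4 (n + 1)) := Nat.one_lt_two_pow (by omega)
    rw [C4_add_two]
    omega

theorem ack_five_add_three_le_C4 (m : ℕ) : ack 5 m + 3 ≤ C4 (m + 2) := by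
  refine ack_succ_add_le_of_step (k := 4) (f := fun m => C4 (m + 2)) (g := fun n => C2 (2 ^ n))
    (C2_strictMono.comp two_pow_strictMono).monotone (fun n => ?_) (fun m => ?_) ?_ m
  · exact (ack_four_add_three_le_C2 n).trans
      (C2_strictMono.monotone (Nat.lt_two_pow_self : n + 3 < 2 ^ (n + 3)))
  · exact C2_two_pow_C4_le (m + 1)
  · calc ack 5 0 + 3 = ack 4 1 + 3 := by rw [ack_succ_zero]
      _ ≤ C2 (1 + 4) := ack_four_add_three_le_C2 1
      _ ≤ C2 (2 ^ C4 1) := C2_strictMono.monotone (by decide)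
      _ ≤ C4 2 := C2_two_pow_C4_le 0

theorem C5_add_two (n : ℕ) : C5 (n + 2) = C5 (n + 1) + 2 ^ C4 (C5 (n + 1)) := rfl

theorem C4_C5_le (n : ℕ) : C4 (C5 (n + 1)) ≤ C5 (n + 2) := by
  rw [C5_add_two]
  exact le_add_left Nat.lt_two_pow_self.le

theorem C5_strictMono : StrictMono C5 := by
  refine strictMono_nat_of_lt_succ fun n => ?_
  cases n with
  | zero => decide
  | succ n =>
    rw [C5_add_two]
    exact Nat.lt_add_of_pos_right (Nat.two_pow_pos _)

theorem ack_six_add_three_le_C5 (m : ℕ) : ack 6 m + 3 ≤ C5 (m + 3) := by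
  refine ack_succ_add_le_of_step (k := 5) (f := fun m => C5 (m + 3)) C4_strictMono.monotone
    (fun n => ?_) (fun m => ?_) ?_ m
  · exact (ack_five_add_three_le_C4 n).trans (C4_strictMono.monotone (by omega))
  · exact C4_C5_le (m + 2)
  · have h2 : 3 ≤ C5 2 := C5_strictMono (by decide : 1 < 2)
    calc ack 6 0 + 3 = ack 5 1 + 3 := by rw [ack_succ_zero]
      _ ≤ C4 3 := ack_five_add_three_le_C4 1
      _ ≤ C4 (C5 2) := C4_strictMono.monotone h2
      _ ≤ C5 3 := C4_C5_le 1

theorem H_eq (n : ℕ) : H n = 2 ^ C2 (2 ^ C4 (C5 n)) := rfl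

theorem H_strictMono : StrictMono H :=
  two_pow_strictMono.comp <| C2_strictMono.comp <| two_pow_strictMono.comp <|
    C4_strictMono.comp C5_strictMono

theorem two_pow_two_pow_C5_le_H (n : ℕ) : 2 ^ 2 ^ C5 n ≤ H n := by
  rw [H_eq]
  refine two_pow_strictMono.monotone (le_trans ?_ C2_strictMono.le_apply)
  exact two_pow_strictMono.monotone C4_strictMono.le_apply

theorem C5_add_eight_le_H {x : ℕ} (hx : 2 ≤ x) : C5 x + 8 ≤ H (2 ^ x) := by
  have h4 : 4 ≤ C5 (2 ^ x) :=
    le_trans (Nat.pow_le_pow_right two_pos hx) C5_strictMono.le_apply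
  calc C5 x + 8 ≤ C5 (2 ^ x) + 8 := by
        gcongr
        exact C5_strictMono.monotone Nat.lt_two_pow_self.le
    _ ≤ 2 ^ C5 (2 ^ x) := add_eight_le_two_pow h4
    _ ≤ 2 ^ 2 ^ C5 (2 ^ x) := two_pow_strictMono.monotone Nat.lt_two_pow_self.le
    _ ≤ H (2 ^ x) := two_pow_two_pow_C5_le_H _

theorem sixteen_le_H_one : 16 ≤ H 1 := two_pow_two_pow_C5_le_H 1

theorem C7_succ (n : ℕ) : C7 (n + 1) = C7 n + H (2 ^ C7 n) - 8 := rfl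

theorem C7_one : C7 1 = H 1 - 8 := by
  -- rewriting the goal, or closing it by `rfl`, would make Lean try to evaluate `H 1`
  have h := C7_succ 0
  rw [show C7 0 = 0 from rfl, show H (2 ^ 0) = H 1 from rfl, Nat.zero_add, Nat.zero_add] at h
  exact h

theorem C7_strictMono : StrictMono C7 :=
  strictMono_nat_of_lt_succ fun n => by
    have : H 1 ≤ H (2 ^ C7 n) := H_strictMono.monotone Nat.one_le_two_pow
    have := sixteen_le_H_one
    rw [C7_succ]
    omega

theorem C5_C7_le {n : ℕ} (hn : 2 ≤ C7 n) : C5 (C7 n) ≤ C7 (n + 1) := by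
  have := C5_add_eight_le_H hn
  rw [C7_succ]
  omega

theorem eight_le_C7_one : 8 ≤ C7 1 := by
  have := sixteen_le_H_one
  rw [C7_one]
  omega

theorem ack_seven_add_three_le_C7 (m : ℕ) : ack 7 m + 3 ≤ C7 (m + 2) := by
  refine ack_succ_add_le_of_step (k := 6) (f := fun m => C7 (m + 2)) C5_strictMono.monotone
    (fun n => ?_) (fun m => ?_) ?_ m
  · exact ack_six_add_three_le_C5 n
  · exact C5_C7_le (le_trans (by omega) C7_strictMono.le_apply)
  · calc ack 7 0 + 3 = ack 6 1 + 3 := by rw [ack_succ_zero]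
      _ ≤ C5 4 := ack_six_add_three_le_C5 1
      _ ≤ C5 (C7 1) := C5_strictMono.monotone (by have := eight_le_C7_one; omega)
      _ ≤ C7 2 := C5_C7_le (by have := eight_le_C7_one; omega)

theorem G_eq (n : ℕ) : G n = H (2 ^ C7 (2 ^ n)) := rfl

theorem G_strictMono : StrictMono G :=
  H_strictMono.comp <| two_pow_strictMono.comp <| C7_strictMono.comp two_pow_strictMono

theorem C7_two_pow_le_G_sub_H_one (n : ℕ) : C7 (2 ^ n) ≤ G n - H 1 := by
  have hlt : C7 (2 ^ n) < 2 ^ C7 (2 ^ n) := Nat.lt_two_pow_self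
  obtain ⟨K, hK⟩ : ∃ K, 2 ^ C7 (2 ^ n) = K + 1 :=
    Nat.exists_eq_add_one.mpr (Nat.two_pow_pos _)
  have := H_strictMono.add_le_nat K 1
  rw [G_eq, hK]
  omega

/-- With its constants as parameters, `C9` can be unfolded without the kernel trying to evaluate
the astronomically large closed term `C9 1`. -/
def C9With (a b : ℕ) : ℕ → ℕ
  | 0 => 0
  | 1 => a
  | m + 2 => C9With a b (m + 1) + G (C9With a b (m + 1)) - b

theorem C9_eq_C9With : C9 = C9With (G (H 1 - 8) - 8) (H 1) := by
  funext x
  delta C9 C9With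
  rfl

theorem C9With_one (a b : ℕ) : C9With a b 1 = a := rfl

theorem C9_one : C9 1 = G (C7 1) - 8 := by
  rw [C9_eq_C9With, C9With_one, C7_one]

theorem C9_add_two (m : ℕ) : C9 (m + 2) = C9 (m + 1) + G (C9 (m + 1)) - H 1 := rfl

theorem ack_seven_add_four_le_G_sub_H_one {n x : ℕ} (h : n + 3 ≤ 2 ^ x) :
    ack 7 n + 4 ≤ G x - H 1 :=
  calc ack 7 n + 4 ≤ C7 (n + 2) + 1 := by have := ack_seven_add_three_le_C7 n; omega
    _ ≤ C7 (n + 3) := C7_strictMono (by omega)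
    _ ≤ C7 (2 ^ x) := C7_strictMono.monotone h
    _ ≤ G x - H 1 := C7_two_pow_le_G_sub_H_one x

theorem ack_seven_one_add_four_le_G_sub_eight {z : ℕ} (hz : 2 ≤ z) :
    ack 7 1 + 4 ≤ G z - 8 := by
  have h4 : 1 + 3 ≤ 2 ^ z := le_trans (by norm_num) (Nat.pow_le_pow_right two_pos hz)
  have := ack_seven_add_four_le_G_sub_H_one h4
  have := sixteen_le_H_one
  omega

theorem ack_eight_add_four_le_C9 (m : ℕ) : ack 8 m + 4 ≤ C9 (m + 1) := by
  refine ack_succ_add_le_of_step (k := 7) (f := fun m => C9 (m + 1)) (g := fun n => G n - H 1)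
    (fun a b hab => Nat.sub_le_sub_right (G_strictMono.monotone hab) _)
    (fun n => ?_) (fun m => ?_) ?_ m
  · exact ack_seven_add_four_le_G_sub_H_one (by have := @Nat.lt_two_pow_self (n + 4); omega)
  · show G (C9 (m + 1)) - H 1 ≤ C9 (m + 2)
    rw [C9_add_two]
    omega
  · calc ack 8 0 + 4 = ack 7 1 + 4 := by rw [ack_succ_zero]
      _ ≤ G (C7 1) - 8 :=
        ack_seven_one_add_four_le_G_sub_eight (by have := eight_le_C7_one; omega)
      _ = C9 1 := C9_one.symm

theorem stmt_5 : ∀ m : ℕ, C9 (m + 2) ≥ ack 8 m + 4 := fun m =>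
  calc ack 8 m + 4 ≤ ack 8 (m + 1) + 4 := Nat.add_le_add_right (ack_mono_right 8 m.le_succ) 4
    _ ≤ C9 (m + 2) := ack_eight_add_four_le_C9 (m + 1)
end

section
/- C₃(C₄(2)) > ack 4 254 + 4 (the paper's computation C̃₃₅(2) > F₄(254) + 4). -/
lemma c4eq (m : ℕ) : C4 (m + 2) = C4 (m + 1) + C1 (C2 (C3 (C4 (m + 1)))) - 1 := by
  rw [C4]

lemma c1eq (n : ℕ) : C1 n = 2 ^ n := rfl
lemma c3eq (n : ℕ) : C3 n = 2 ^ n := rfl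
lemma c4one : C4 1 = 8 := rfl

lemma myone (n : ℕ) : 1 ≤ 2 ^ n := Nat.one_le_two_pow
lemma mymono {a b : ℕ} (h : a ≤ b) : 2 ^ a ≤ 2 ^ b :=
  Nat.pow_le_pow_right (by norm_num) h

def twr : ℕ → ℕ
  | 0 => 1
  | n + 1 => 2 ^ twr n

lemma twr_succ (n : ℕ) : twr (n + 1) = 2 ^ twr n := rfl

lemma twr_pos (n : ℕ) : 1 ≤ twr n := by
  cases n with
  | zero => simp [twr]
  | succ n => exact myone _

lemma ack_four (n : ℕ) : ack 4 n + 3 = twr (n + 3) := by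
  induction n with
  | zero => simp [ack, twr]
  | succ n ih =>
    have h : ack 4 (n + 1) = ack 3 (ack 4 n) := by
      show ack (3 + 1) (n + 1) = _
      rw [ack_succ_succ]
    rw [h, ack_three, ih]
    have h3 : 3 ≤ 2 ^ twr (n + 3) := by
      have e2 : twr (n + 3) = 2 ^ twr (n + 2) := by
        rw [show n + 3 = (n + 2) + 1 by omega, twr_succ]
      have h2 : 2 ≤ twr (n + 3) := by
        rw [e2]
        calc (2 : ℕ) = 2 ^ 1 := by norm_num
        _ ≤ 2 ^ twr (n + 2) := mymono (twr_pos _)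
      calc (3 : ℕ) ≤ 2 ^ 2 := by norm_num
      _ ≤ 2 ^ twr (n + 3) := mymono h2
    have e : twr (n + 1 + 3) = 2 ^ twr (n + 3) := by
      rw [show n + 1 + 3 = (n + 3) + 1 by omega, twr_succ]
    omega

lemma c2_ge (m : ℕ) : twr m ≤ C2 (m + 1) := by
  induction m with
  | zero => simp [twr, C2]
  | succ m ih =>
    show twr (m + 1) ≤ C2 (m + 1) + 2 ^ C2 (m + 1)
    have h : twr (m + 1) ≤ 2 ^ C2 (m + 1) := by
      rw [twr_succ]
      exact mymono ih
    omega

lemma arith1 (x : ℕ) (h : 1 ≤ x) : 8 + x - 1 = 7 + x := by omega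
lemma arith2 (x y : ℕ) (h : x ≤ y) : x + 7 ≤ 7 + y := by omega
lemma powadd7 (x : ℕ) : 2 ^ (x + 7) = 2 ^ x * 128 := by rw [pow_add]; norm_num
lemma finarith (a b e t : ℕ) (h1 : 1 ≤ t) (hea : e ≤ a) (he : e = t * 128)
    (hb : b + 3 = t) : a > b + 4 := by
  subst he hb
  omega

theorem stmt_10 : C3 (C4 2) > ack 4 254 + 4 := by
  have hC4 : C4 2 = 7 + 2 ^ C2 256 := by
    have h := c4eq 0
    norm_num at h
    rw [h, c4one, c3eq, c1eq, show (2 : ℕ) ^ 8 = 256 by norm_num]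
    exact arith1 _ (myone _)
  have h2 : twr 255 ≤ C2 256 := by
    rw [show (256 : ℕ) = 255 + 1 by norm_num]
    exact c2_ge 255
  have h3 : twr 256 + 7 ≤ C4 2 := by
    rw [hC4]
    have e : twr 256 = 2 ^ twr 255 := by
      rw [show (256 : ℕ) = 255 + 1 by norm_num]
      exact twr_succ 255
    have ht : twr 256 ≤ 2 ^ C2 256 := by
      rw [e]
      exact mymono h2
    exact arith2 _ _ ht
  have h4 : 2 ^ (twr 256 + 7) ≤ C3 (C4 2) := by
    rw [c3eq]
    exact mymono h3
  have h5 : 2 ^ (twr 256 + 7) = twr 257 * 128 := by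
    have e : twr 257 = 2 ^ twr 256 := by
      rw [show (257 : ℕ) = 256 + 1 by norm_num]
      exact twr_succ 256
    rw [e]
    exact powadd7 _
  have h6 : ack 4 254 + 3 = twr 257 := by
    rw [show (257 : ℕ) = 254 + 3 by norm_num]
    exact ack_four 254
  exact finarith _ _ _ _ (twr_pos 257) h4 h5 h6
end
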